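/- (Identification of the projection k⁰ in the appendix derivation of the DR linear space.) Let g be a bounded measurable real-valued function of (Y, V) and k⁰ a bounded measurable real-valued function of V. Suppose in addition that π(V) ≠ 1/2 P-a.s., and that for every bounded measurable real-valued function k of V, E[ ( (R/π(V)) · (g(Y, V) − k⁰(V)) − ((1 − R)/(1 − π(V))) · (k⁰(V) − E[g(Y, V) | V, L]) ) · ( R/π(V) − (1 − R)/(1 − π(V)) ) · k(V) ] = 0. Then k⁰(V) = E[g(Y, V) | V] P-a.s. -/

import Mathlib

open MeasureTheory ProbabilityTheory

lemma aux_intble {Ω : Type*} {mΩ : MeasurableSpace Ω} {P : Measure Ω}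
    [IsFiniteMeasure P] {f : Ω → ℝ} {C : ℝ} (hf : AEStronglyMeasurable f P)
    (h : ∀ᵐ ω ∂P, |f ω| ≤ C) : Integrable f P :=
  (integrable_const C).mono' hf (by simpa [Real.norm_eq_abs] using h)

lemma aux_abs_mul_le {a b A B : ℝ} (ha : |a| ≤ A) (hb : |b| ≤ B) : |a * b| ≤ A * B := by
  rw [abs_mul]
  exact mul_le_mul ha hb (abs_nonneg _) ((abs_nonneg a).trans ha)

set_option maxHeartbeats 1000000 in
/-- Identification of the projection `k⁰` in the appendix derivation of the
DR linear space: if `π(V) ≠ 1/2` a.s. and the projection inner product vanishes against every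
bounded measurable `k` of `V`, then `k⁰(V) = E[g(Y, V) | V]` a.s. -/
theorem dr_projection_identification
    {Ω : Type*} {mΩ : MeasurableSpace Ω} [StandardBorelSpace Ω] [Nonempty Ω]
    {P : Measure Ω} [IsProbabilityMeasure P]
    {𝒱 𝓛 𝒴 : Type*} [m𝒱 : MeasurableSpace 𝒱] [m𝓛 : MeasurableSpace 𝓛]
    [m𝒴 : MeasurableSpace 𝒴]
    (V : Ω → 𝒱) (L : Ω → 𝓛) (Y : Ω → 𝒴)
    (hV : Measurable V) (hL : Measurable L) (hY : Measurable Y)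
    (R : Ω → ℝ) (hR : Measurable R) (hR01 : ∀ ω, R ω = 0 ∨ R ω = 1)
    (π : 𝒱 → ℝ) (hπ : Measurable π)
    -- `π(V)` is a version of `E[R | σ(V)]`
    (hπV : P[R | MeasurableSpace.comap V m𝒱] =ᵐ[P] fun ω => π (V ω))
    -- positivity
    (δ : ℝ) (hδ0 : 0 < δ) (hδhalf : δ < 1 / 2)
    (hpos : ∀ᵐ ω ∂P, δ ≤ π (V ω) ∧ π (V ω) ≤ 1 - δ)
    -- ignorability: `R ⟂ (Y, L) | σ(V)`
    (hign : CondIndepFun (MeasurableSpace.comap V m𝒱) (hV.comap_le) R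
      (fun ω => (Y ω, L ω)) P)
    (g : 𝒴 × 𝒱 → ℝ) (hg : Measurable g) (Cg : ℝ) (hgbdd : ∀ x, |g x| ≤ Cg)
    (k0 : 𝒱 → ℝ) (hk0 : Measurable k0) (Ck0 : ℝ) (hk0bdd : ∀ v, |k0 v| ≤ Ck0)
    -- `π(V) ≠ 1/2` almost surely
    (hπhalf : ∀ᵐ ω ∂P, π (V ω) ≠ 1 / 2)
    -- the projection inner product vanishes against every bounded measurable `k` of `V`
    (horth : ∀ (k : 𝒱 → ℝ), Measurable k → (∃ Ck : ℝ, ∀ v, |k v| ≤ Ck) →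
      ∫ ω, ((R ω / π (V ω)) * (g (Y ω, V ω) - k0 (V ω))
            - ((1 - R ω) / (1 - π (V ω)))
              * (k0 (V ω)
                - (P[fun ω' => g (Y ω', V ω')
                    | MeasurableSpace.comap (fun ω' => (V ω', L ω')) inferInstance]) ω))
          * (R ω / π (V ω) - (1 - R ω) / (1 - π (V ω))) * k (V ω) ∂P = 0) :
    (fun ω => k0 (V ω))
      =ᵐ[P] P[fun ω' => g (Y ω', V ω') | MeasurableSpace.comap V m𝒱] := by
  classical
  -- abbreviations
  set G : Ω → ℝ := fun ω => g (Y ω, V ω) with hGdef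
  set p : Ω → ℝ := fun ω => π (V ω) with hpdef
  set T : Ω → 𝒱 × (𝒴 × 𝓛) := fun ω => (V ω, (Y ω, L ω)) with hTdef
  set W : Ω → 𝒴 × 𝓛 := fun ω => (Y ω, L ω) with hWdef
  have hT : Measurable T := hV.prodMk (hY.prodMk hL)
  have hW : Measurable W := hY.prodMk hL
  have h𝓥le : MeasurableSpace.comap V m𝒱 ≤ mΩ := hV.comap_le
  have h𝓦le : MeasurableSpace.comap (fun ω' => (V ω', L ω'))
      (Prod.instMeasurableSpace : MeasurableSpace (𝒱 × 𝓛)) ≤ mΩ := (hV.prodMk hL).comap_le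
  have h𝓜le : MeasurableSpace.comap T
      (Prod.instMeasurableSpace : MeasurableSpace (𝒱 × (𝒴 × 𝓛))) ≤ mΩ := hT.comap_le
  have hTm : Measurable[MeasurableSpace.comap T Prod.instMeasurableSpace] T :=
    measurable_iff_comap_le.mpr le_rfl
  have hVm : Measurable[MeasurableSpace.comap V m𝒱] V :=
    measurable_iff_comap_le.mpr le_rfl
  -- σ-algebra inclusions
  have h𝓥𝓦 : MeasurableSpace.comap V m𝒱 ≤ MeasurableSpace.comap
      (fun ω' => (V ω', L ω')) Prod.instMeasurableSpace :=
    calc MeasurableSpace.comap V m𝒱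
        = MeasurableSpace.comap (fun ω' => (V ω', L ω'))
            (MeasurableSpace.comap Prod.fst m𝒱) :=
          (MeasurableSpace.comap_comp (f := Prod.fst)
            (g := fun ω' => (V ω', L ω'))).symm
      _ ≤ _ := MeasurableSpace.comap_mono measurable_fst.comap_le
  have h𝓥𝓜 : MeasurableSpace.comap V m𝒱 ≤ MeasurableSpace.comap T
      Prod.instMeasurableSpace :=
    calc MeasurableSpace.comap V m𝒱
        = MeasurableSpace.comap T (MeasurableSpace.comap Prod.fst m𝒱) :=
          (MeasurableSpace.comap_comp (f := Prod.fst) (g := T)).symm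
      _ ≤ _ := MeasurableSpace.comap_mono measurable_fst.comap_le
  have h𝓦𝓜 : MeasurableSpace.comap (fun ω' => (V ω', L ω')) Prod.instMeasurableSpace
      ≤ MeasurableSpace.comap T Prod.instMeasurableSpace :=
    calc MeasurableSpace.comap (fun ω' => (V ω', L ω')) Prod.instMeasurableSpace
        = MeasurableSpace.comap T (MeasurableSpace.comap
            (fun x : 𝒱 × (𝒴 × 𝓛) => (x.1, x.2.2)) Prod.instMeasurableSpace) :=
          (MeasurableSpace.comap_comp
            (f := fun x : 𝒱 × (𝒴 × 𝓛) => (x.1, x.2.2)) (g := T)).symm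
      _ ≤ _ := MeasurableSpace.comap_mono
          (measurable_fst.prodMk (measurable_snd.comp measurable_snd)).comap_le
  -- basic measurability and integrability
  have hGmeas : Measurable G := hg.comp (hY.prodMk hV)
  have hpmeas : Measurable p := hπ.comp hV
  have hk0V : Measurable fun ω => k0 (V ω) := hk0.comp hV
  have hp𝓥 : Measurable[MeasurableSpace.comap V m𝒱] p := hπ.comp hVm
  have hk0V𝓥 : Measurable[MeasurableSpace.comap V m𝒱] fun ω => k0 (V ω) := hk0.comp hVm
  have hG𝓜 : Measurable[MeasurableSpace.comap T Prod.instMeasurableSpace] G :=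
    hg.comp (((measurable_fst.comp measurable_snd).comp hTm).prodMk
      (measurable_fst.comp hTm))
  have hp𝓜 : Measurable[MeasurableSpace.comap T Prod.instMeasurableSpace] p :=
    hπ.comp (measurable_fst.comp hTm)
  have hk0V𝓜 : Measurable[MeasurableSpace.comap T Prod.instMeasurableSpace]
      (fun ω => k0 (V ω)) := hk0.comp (measurable_fst.comp hTm)
  have hRbd : ∀ ω, |R ω| ≤ 1 := by
    intro ω; rcases hR01 ω with h | h <;> rw [h] <;> norm_num
  have hRint : Integrable R P := aux_intble hR.aestronglyMeasurable (.of_forall hRbd)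
  set Cg' : ℝ := max Cg 0 with hCg'def
  have hGbd : ∀ ω, |G ω| ≤ Cg' := fun ω => (hgbdd _).trans (le_max_left _ _)
  have hGint : Integrable G P := aux_intble hGmeas.aestronglyMeasurable (.of_forall hGbd)
  set Ck0' : ℝ := max Ck0 0 with hCk0'def
  have hk0bd : ∀ ω, |k0 (V ω)| ≤ Ck0' := fun ω => (hk0bdd _).trans (le_max_left _ _)
  have hpbd : ∀ᵐ ω ∂P, |p ω| ≤ 1 := by
    filter_upwards [hpos] with ω h
    rw [abs_le]; constructor <;> nlinarith [h.1, h.2]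
  have hpint : Integrable p P := aux_intble hpmeas.aestronglyMeasurable hpbd
  -- conditional expectations
  set μc : Ω → ℝ :=
    P[G | MeasurableSpace.comap (fun ω' => (V ω', L ω')) Prod.instMeasurableSpace]
    with hμcdef
  set f : Ω → ℝ := P[G | MeasurableSpace.comap V m𝒱] with hfdef
  have hμcsm : StronglyMeasurable[MeasurableSpace.comap (fun ω' => (V ω', L ω'))
      Prod.instMeasurableSpace] μc := stronglyMeasurable_condExp
  have hfsm : StronglyMeasurable[MeasurableSpace.comap V m𝒱] f := stronglyMeasurable_condExp
  have hμcasm : AEStronglyMeasurable μc P :=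
    (hμcsm.mono h𝓦le).aestronglyMeasurable
  have hfasm : AEStronglyMeasurable f P := (hfsm.mono h𝓥le).aestronglyMeasurable
  have hGbd' : ∀ᵐ ω ∂P, |G ω| ≤ (Cg'.toNNReal : ℝ) := by
    refine .of_forall fun ω => (hGbd ω).trans ?_
    rw [Real.coe_toNNReal _ (le_max_right _ _)]
  have hμcbd : ∀ᵐ ω ∂P, |μc ω| ≤ Cg' := by
    filter_upwards [ae_bdd_condExp_of_ae_bdd
      (m := MeasurableSpace.comap (fun ω' => (V ω', L ω')) Prod.instMeasurableSpace)
      hGbd'] with ω h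
    rwa [Real.coe_toNNReal _ (le_max_right _ _)] at h
  have hfbd : ∀ᵐ ω ∂P, |f ω| ≤ Cg' := by
    filter_upwards [ae_bdd_condExp_of_ae_bdd (m := MeasurableSpace.comap V m𝒱)
      hGbd'] with ω h
    rwa [Real.coe_toNNReal _ (le_max_right _ _)] at h
  have hμcint : Integrable μc P := integrable_condExp
  -- Step 1: E[R | 𝓜] = p a.s.
  have hmain : ∀ ⦃C : Set (𝒱 × (𝒴 × 𝓛))⦄, MeasurableSet C →
      ∫ ω in T ⁻¹' C, p ω ∂P = ∫ ω in T ⁻¹' C, R ω ∂P := by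
    refine MeasurableSpace.induction_on_inter
      (C := fun C (_ : MeasurableSet C) =>
        ∫ ω in T ⁻¹' C, p ω ∂P = ∫ ω in T ⁻¹' C, R ω ∂P)
      generateFrom_prod.symm isPiSystem_prod ?_ ?_ ?_ ?_
    · simp
    · rintro t ⟨B, hB, D, hD, rfl⟩
      simp only [Set.mem_setOf_eq] at hB hD
      have hpre : T ⁻¹' (B ×ˢ D) = (V ⁻¹' B) ∩ (W ⁻¹' D) := by
        ext ω; simp [hTdef, hWdef, Set.mem_prod]
      rw [hpre]
      set A : Set Ω := V ⁻¹' B with hAdef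
      set E : Set Ω := W ⁻¹' D with hEdef
      have hA : MeasurableSet A := hV hB
      have hA𝓥 : MeasurableSet[MeasurableSpace.comap V m𝒱] A := ⟨B, hB, rfl⟩
      have hE : MeasurableSet E := hW hD
      set e : Ω → ℝ := E.indicator (fun _ => (1 : ℝ)) with hedef
      have hebd : ∀ ω, |e ω| ≤ 1 := fun ω => by
        rw [hedef]; by_cases h : ω ∈ E <;> simp [Set.indicator_apply, h]
      have hemeas : Measurable e := measurable_const.indicator hE
      have heint : Integrable e P := aux_intble hemeas.aestronglyMeasurable (.of_forall hebd)
      set q : Ω → ℝ := P[e | MeasurableSpace.comap V m𝒱] with hqdef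
      -- conditional independence gives the product formula
      have hcond := (condIndepFun_iff_condExp_inter_preimage_eq_mul
        (hm' := hV.comap_le) hR hW).mp hign {1} D (measurableSet_singleton 1) hD
      have hRind : (R ⁻¹' {1}).indicator (fun _ => (1 : ℝ)) = R := by
        funext ω
        rcases hR01 ω with h | h <;>
          simp [Set.indicator_apply, Set.mem_preimage, h]
      set ψ : Ω → ℝ := (R ⁻¹' {1} ∩ E).indicator (fun _ => (1 : ℝ)) with hψdef
      have hψbd : ∀ ω, |ψ ω| ≤ 1 := fun ω => by
        rw [hψdef]; by_cases h : ω ∈ R ⁻¹' {1} ∩ E <;> simp [Set.indicator_apply, h]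
      have hψmeas : Measurable ψ :=
        measurable_const.indicator ((hR (measurableSet_singleton 1)).inter hE)
      have hψint : Integrable ψ P := aux_intble hψmeas.aestronglyMeasurable (.of_forall hψbd)
      have hcond' : P[ψ | MeasurableSpace.comap V m𝒱] =ᵐ[P] fun ω => p ω * q ω := by
        rw [hψdef]
        refine hcond.trans ?_
        have h1 : P[(R ⁻¹' {1}).indicator (fun _ => (1 : ℝ))
            | MeasurableSpace.comap V m𝒱] = P[R | MeasurableSpace.comap V m𝒱] := by
          rw [hRind]
        rw [h1]
        filter_upwards [hπV] with ω hω
        rw [hω]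
      -- both set integrals equal ∫_A p * q
      have heq1 : ∫ ω in A ∩ E, R ω ∂P = ∫ ω in A, p ω * q ω ∂P := by
        have h2 : ∀ ω, E.indicator R ω = ψ ω := by
          intro ω
          rcases hR01 ω with h | h <;> by_cases hE' : ω ∈ E <;>
            simp [hψdef, Set.indicator_apply, hE', h, Set.mem_preimage]
        calc ∫ ω in A ∩ E, R ω ∂P = ∫ ω in A, E.indicator R ω ∂P :=
              (setIntegral_indicator hE).symm
          _ = ∫ ω in A, ψ ω ∂P := by
              exact setIntegral_congr_ae hA (.of_forall fun ω _ => h2 ω)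
          _ = ∫ ω in A, (P[ψ | MeasurableSpace.comap V m𝒱]) ω ∂P :=
              (setIntegral_condExp h𝓥le hψint hA𝓥).symm
          _ = ∫ ω in A, p ω * q ω ∂P := by
              refine setIntegral_congr_ae hA ?_
              filter_upwards [hcond'] with ω h _ using h
      have heq2 : ∫ ω in A ∩ E, p ω ∂P = ∫ ω in A, p ω * q ω ∂P := by
        have hpe_int : Integrable (p * e) P := by
          refine aux_intble (C := 1 * 1) (hpmeas.mul hemeas).aestronglyMeasurable ?_
          filter_upwards [hpbd] with ω h
          simpa using aux_abs_mul_le h (hebd ω)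
        have hmul := condExp_mul_of_stronglyMeasurable_left (μ := P)
          (m := MeasurableSpace.comap V m𝒱) hp𝓥.stronglyMeasurable hpe_int heint
        calc ∫ ω in A ∩ E, p ω ∂P = ∫ ω in A, E.indicator p ω ∂P :=
              (setIntegral_indicator hE).symm
          _ = ∫ ω in A, (p * e) ω ∂P := by
              refine setIntegral_congr_ae hA (.of_forall fun ω _ => ?_)
              by_cases h : ω ∈ E <;> simp [hedef, Set.indicator_apply, h]
          _ = ∫ ω in A, (P[p * e | MeasurableSpace.comap V m𝒱]) ω ∂P :=
              (setIntegral_condExp h𝓥le hpe_int hA𝓥).symm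
          _ = ∫ ω in A, p ω * q ω ∂P := by
              refine setIntegral_congr_ae hA ?_
              filter_upwards [hmul] with ω h _
              simpa using h
      rw [heq1, heq2]
    · intro t ht hQ
      have h1 : T ⁻¹' tᶜ = (T ⁻¹' t)ᶜ := rfl
      have h2 := integral_add_compl (hT ht) hpint
      have h3 := integral_add_compl (hT ht) hRint
      have h4 : ∫ ω, p ω ∂P = ∫ ω, R ω ∂P := by
        rw [← integral_condExp h𝓥le (μ := P) (f := R)]
        exact (integral_congr_ae hπV).symm
      rw [h1]
      linarith
    · intro s hd hm hQ
      rw [Set.preimage_iUnion, integral_iUnion (fun i => hT (hm i))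
          (hd.mono fun i j h => h.preimage T) hpint.integrableOn,
        integral_iUnion (fun i => hT (hm i))
          (hd.mono fun i j h => h.preimage T) hRint.integrableOn]
      exact tsum_congr hQ
  have hF : P[R | MeasurableSpace.comap T Prod.instMeasurableSpace] =ᵐ[P] p := by
    refine (ae_eq_condExp_of_forall_setIntegral_eq h𝓜le hRint
      (fun s _ _ => hpint.integrableOn) (fun s hs _ => ?_) ?_).symm
    · obtain ⟨C, hC, rfl⟩ := hs
      exact hmain hC
    · exact (hp𝓜.stronglyMeasurable).aestronglyMeasurable
  -- Step 2: key pull-out identities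
  have key𝓜 : ∀ (ξ : Ω → ℝ) (Cξ : ℝ),
      StronglyMeasurable[MeasurableSpace.comap T Prod.instMeasurableSpace] ξ →
      (∀ᵐ ω ∂P, |ξ ω| ≤ Cξ) →
      ∫ ω, ξ ω * R ω ∂P = ∫ ω, ξ ω * p ω ∂P := by
    intro ξ Cξ hsm hbd
    have hξasm : AEStronglyMeasurable ξ P := (hsm.mono h𝓜le).aestronglyMeasurable
    have hξRint : Integrable (ξ * R) P := by
      refine aux_intble (C := Cξ * 1) (hξasm.mul hR.aestronglyMeasurable) ?_
      filter_upwards [hbd] with ω h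
      simpa using aux_abs_mul_le h (hRbd ω)
    have h1 : P[ξ * R | MeasurableSpace.comap T Prod.instMeasurableSpace]
        =ᵐ[P] ξ * P[R | MeasurableSpace.comap T Prod.instMeasurableSpace] :=
      condExp_mul_of_stronglyMeasurable_left hsm hξRint hRint
    calc ∫ ω, ξ ω * R ω ∂P
        = ∫ ω, (P[ξ * R | MeasurableSpace.comap T Prod.instMeasurableSpace]) ω ∂P :=
          (integral_condExp h𝓜le (f := ξ * R)).symm
      _ = ∫ ω, ξ ω * p ω ∂P := by
          refine integral_congr_ae ?_
          filter_upwards [h1, hF] with ω h hf'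
          simp only [Pi.mul_apply] at h
          rw [h, hf']
  have key𝓥 : ∀ (ζ u : Ω → ℝ) (Cζ Cu : ℝ),
      StronglyMeasurable[MeasurableSpace.comap V m𝒱] ζ →
      AEStronglyMeasurable u P → (∀ᵐ ω ∂P, |ζ ω| ≤ Cζ) → (∀ᵐ ω ∂P, |u ω| ≤ Cu) →
      Integrable u P →
      ∫ ω, ζ ω * u ω ∂P = ∫ ω, ζ ω * (P[u | MeasurableSpace.comap V m𝒱]) ω ∂P := by
    intro ζ u Cζ Cu hsm huasm hbd hubd huint
    have hζasm : AEStronglyMeasurable ζ P := (hsm.mono h𝓥le).aestronglyMeasurable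
    have hζuint : Integrable (ζ * u) P := by
      refine aux_intble (C := Cζ * Cu) (hζasm.mul huasm) ?_
      filter_upwards [hbd, hubd] with ω h h'
      simpa using aux_abs_mul_le h h'
    have h1 : P[ζ * u | MeasurableSpace.comap V m𝒱]
        =ᵐ[P] ζ * P[u | MeasurableSpace.comap V m𝒱] :=
      condExp_mul_of_stronglyMeasurable_left hsm hζuint huint
    calc ∫ ω, ζ ω * u ω ∂P
        = ∫ ω, (P[ζ * u | MeasurableSpace.comap V m𝒱]) ω ∂P :=
          (integral_condExp h𝓥le (f := ζ * u)).symm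
      _ = ∫ ω, ζ ω * (P[u | MeasurableSpace.comap V m𝒱]) ω ∂P := integral_congr_ae (by
          filter_upwards [h1] with ω h
          simpa using h)
  -- Step 3: per-set identity ∫_{V⁻¹ B} (1/p - 1/(1-p)) (f - k0∘V) = 0
  have hsetid : ∀ B : Set 𝒱, MeasurableSet B →
      ∫ ω in V ⁻¹' B, (1 / p ω - 1 / (1 - p ω)) * (f ω - k0 (V ω)) ∂P = 0 := by
    intro B hB
    set k : 𝒱 → ℝ := B.indicator (fun _ => (1 : ℝ)) with hkdef
    have hkbd : ∀ v, |k v| ≤ 1 := fun v => by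
      rw [hkdef]; by_cases h : v ∈ B <;> simp [Set.indicator_apply, h]
    have hkmeas : Measurable k := measurable_const.indicator hB
    have h0 := horth k hkmeas ⟨1, hkbd⟩
    set φ1 : Ω → ℝ := fun ω => (G ω - k0 (V ω)) * (1 / p ω) * (1 / p ω) * k (V ω)
      with hφ1def
    set φ2 : Ω → ℝ := fun ω => (k0 (V ω) - μc ω) * (1 / (1 - p ω)) * (1 / (1 - p ω))
      * k (V ω) with hφ2def
    -- a.e. bounds
    have hinvp : ∀ᵐ ω ∂P, |1 / p ω| ≤ 1 / δ ∧ |1 / (1 - p ω)| ≤ 1 / δ ∧ p ω ≠ 0 ∧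
        (1 : ℝ) - p ω ≠ 0 := by
      filter_upwards [hpos] with ω h
      have h1 : 0 < p ω := lt_of_lt_of_le hδ0 h.1
      have h2 : 0 < 1 - p ω := by nlinarith [h.2]
      refine ⟨?_, ?_, ne_of_gt h1, ne_of_gt h2⟩
      · rw [abs_of_pos (by positivity)]
        exact one_div_le_one_div_of_le hδ0 h.1
      · rw [abs_of_pos (by positivity)]
        exact one_div_le_one_div_of_le hδ0 (by nlinarith [h.2])
    have hφ1bd : ∀ᵐ ω ∂P, |φ1 ω| ≤ (Cg' + Ck0') * (1 / δ) * (1 / δ) * 1 := by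
      filter_upwards [hinvp] with ω h
      have hsub : |G ω - k0 (V ω)| ≤ Cg' + Ck0' :=
        (abs_sub _ _).trans (add_le_add (hGbd ω) (hk0bd ω))
      exact aux_abs_mul_le (aux_abs_mul_le (aux_abs_mul_le hsub h.1) h.1) (hkbd _)
    have hφ2bd : ∀ᵐ ω ∂P, |φ2 ω| ≤ (Ck0' + Cg') * (1 / δ) * (1 / δ) * 1 := by
      filter_upwards [hinvp, hμcbd] with ω h hμ
      have hsub : |k0 (V ω) - μc ω| ≤ Ck0' + Cg' :=
        (abs_sub _ _).trans (add_le_add (hk0bd ω) hμ)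
      exact aux_abs_mul_le (aux_abs_mul_le (aux_abs_mul_le hsub h.2.1) h.2.1) (hkbd _)
    have hφ1sm : StronglyMeasurable[MeasurableSpace.comap T Prod.instMeasurableSpace] φ1 :=
      ((((hG𝓜.sub hk0V𝓜).stronglyMeasurable.mul
        ((measurable_const.div hp𝓜).stronglyMeasurable)).mul
        ((measurable_const.div hp𝓜).stronglyMeasurable)).mul
        (hkmeas.comp (measurable_fst.comp hTm)).stronglyMeasurable)
    have hφ2sm : StronglyMeasurable[MeasurableSpace.comap T Prod.instMeasurableSpace] φ2 :=
      ((((hk0V𝓜.stronglyMeasurable.sub (hμcsm.mono h𝓦𝓜)).mul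
        ((measurable_const.div (measurable_const.sub hp𝓜)).stronglyMeasurable)).mul
        ((measurable_const.div (measurable_const.sub hp𝓜)).stronglyMeasurable)).mul
        (hkmeas.comp (measurable_fst.comp hTm)).stronglyMeasurable)
    have hφ1asm : AEStronglyMeasurable φ1 P := (hφ1sm.mono h𝓜le).aestronglyMeasurable
    have hφ2asm : AEStronglyMeasurable φ2 P := (hφ2sm.mono h𝓜le).aestronglyMeasurable
    have hφ1int : Integrable φ1 P := aux_intble hφ1asm hφ1bd
    have hφ2int : Integrable φ2 P := aux_intble hφ2asm hφ2bd
    have hφ1Rint : Integrable (fun ω => φ1 ω * R ω) P := by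
      refine aux_intble (C := (Cg' + Ck0') * (1 / δ) * (1 / δ) * 1 * 1) (hφ1asm.mul hR.aestronglyMeasurable) ?_
      filter_upwards [hφ1bd] with ω h
      exact aux_abs_mul_le h (hRbd ω)
    have hφ2Rint : Integrable (fun ω => φ2 ω * (1 - R ω)) P := by
      refine aux_intble (C := (Ck0' + Cg') * (1 / δ) * (1 / δ) * 1 * 1) (hφ2asm.mul (aestronglyMeasurable_const.sub
        hR.aestronglyMeasurable)) ?_
      filter_upwards [hφ2bd] with ω h
      refine aux_abs_mul_le h ?_
      rcases hR01 ω with h' | h' <;> rw [h'] <;> norm_num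
    -- rewrite the orthogonality integral
    have h0' : ∫ ω, (φ1 ω * R ω + φ2 ω * (1 - R ω)) ∂P = 0 := by
      rw [← h0]
      refine integral_congr_ae (.of_forall fun ω => ?_)
      rcases hR01 ω with h | h <;> rw [hφ1def, hφ2def] <;> simp only [h] <;> ring
    have hsplit : ∫ ω, φ1 ω * R ω ∂P + ∫ ω, φ2 ω * (1 - R ω) ∂P = 0 := by
      rw [← integral_add hφ1Rint hφ2Rint]
      exact h0'
    -- apply key𝓜
    have e1 : ∫ ω, φ1 ω * R ω ∂P = ∫ ω, φ1 ω * p ω ∂P :=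
      key𝓜 φ1 _ hφ1sm hφ1bd
    have e2 : ∫ ω, φ2 ω * (1 - R ω) ∂P = ∫ ω, φ2 ω * (1 - p ω) ∂P := by
      have e2a : ∫ ω, φ2 ω * R ω ∂P = ∫ ω, φ2 ω * p ω ∂P :=
        key𝓜 φ2 _ hφ2sm hφ2bd
      have hφ2pint : Integrable (fun ω => φ2 ω * p ω) P := by
        refine aux_intble (C := (Ck0' + Cg') * (1 / δ) * (1 / δ) * 1 * 1) (hφ2asm.mul hpmeas.aestronglyMeasurable) ?_
        filter_upwards [hφ2bd, hpbd] with ω h h'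
        exact aux_abs_mul_le h h'
      have hφ2Rint' : Integrable (fun ω => φ2 ω * R ω) P := by
        refine aux_intble (C := (Ck0' + Cg') * (1 / δ) * (1 / δ) * 1 * 1) (hφ2asm.mul hR.aestronglyMeasurable) ?_
        filter_upwards [hφ2bd] with ω h
        exact aux_abs_mul_le h (hRbd ω)
      have l1 : ∫ ω, φ2 ω * (1 - R ω) ∂P = ∫ ω, φ2 ω ∂P - ∫ ω, φ2 ω * R ω ∂P := by
        rw [← integral_sub hφ2int hφ2Rint']
        refine integral_congr_ae (.of_forall fun ω => ?_)
        ring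
      have l2 : ∫ ω, φ2 ω * (1 - p ω) ∂P = ∫ ω, φ2 ω ∂P - ∫ ω, φ2 ω * p ω ∂P := by
        rw [← integral_sub hφ2int hφ2pint]
        refine integral_congr_ae (.of_forall fun ω => ?_)
        ring
      rw [l1, l2, e2a]
    -- now simplify φ1 * p and φ2 * (1-p)
    set ζ1 : Ω → ℝ := fun ω => (1 / p ω) * k (V ω) with hζ1def
    set ζ2 : Ω → ℝ := fun ω => (1 / (1 - p ω)) * k (V ω) with hζ2def
    have hζ1sm : StronglyMeasurable[MeasurableSpace.comap V m𝒱] ζ1 :=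
      ((measurable_const.div hp𝓥).mul (hkmeas.comp hVm)).stronglyMeasurable
    have hζ2sm : StronglyMeasurable[MeasurableSpace.comap V m𝒱] ζ2 :=
      ((measurable_const.div (measurable_const.sub hp𝓥)).mul
        (hkmeas.comp hVm)).stronglyMeasurable
    have hζ1bd : ∀ᵐ ω ∂P, |ζ1 ω| ≤ 1 / δ * 1 := by
      filter_upwards [hinvp] with ω h
      exact aux_abs_mul_le h.1 (hkbd _)
    have hζ2bd : ∀ᵐ ω ∂P, |ζ2 ω| ≤ 1 / δ * 1 := by
      filter_upwards [hinvp] with ω h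
      exact aux_abs_mul_le h.2.1 (hkbd _)
    have hζ1asm : AEStronglyMeasurable ζ1 P := (hζ1sm.mono h𝓥le).aestronglyMeasurable
    have hζ2asm : AEStronglyMeasurable ζ2 P := (hζ2sm.mono h𝓥le).aestronglyMeasurable
    -- integrabilities
    have hint1 : Integrable (fun ω => ζ1 ω * G ω) P := by
      refine aux_intble (C := 1 / δ * 1 * Cg') (hζ1asm.mul hGmeas.aestronglyMeasurable) ?_
      filter_upwards [hζ1bd] with ω h
      exact aux_abs_mul_le h (hGbd ω)
    have hint2 : Integrable (fun ω => ζ1 ω * k0 (V ω)) P := by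
      refine aux_intble (C := 1 / δ * 1 * Ck0') (hζ1asm.mul hk0V.aestronglyMeasurable) ?_
      filter_upwards [hζ1bd] with ω h
      exact aux_abs_mul_le h (hk0bd ω)
    have hint3 : Integrable (fun ω => ζ2 ω * k0 (V ω)) P := by
      refine aux_intble (C := 1 / δ * 1 * Ck0') (hζ2asm.mul hk0V.aestronglyMeasurable) ?_
      filter_upwards [hζ2bd] with ω h
      exact aux_abs_mul_le h (hk0bd ω)
    have hint4 : Integrable (fun ω => ζ2 ω * μc ω) P := by
      refine aux_intble (C := 1 / δ * 1 * Cg') (hζ2asm.mul hμcasm) ?_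
      filter_upwards [hζ2bd, hμcbd] with ω h h'
      exact aux_abs_mul_le h h'
    have hint5 : Integrable (fun ω => ζ1 ω * f ω) P := by
      refine aux_intble (C := 1 / δ * 1 * Cg') (hζ1asm.mul hfasm) ?_
      filter_upwards [hζ1bd, hfbd] with ω h h'
      exact aux_abs_mul_le h h'
    have hint6 : Integrable (fun ω => ζ2 ω * f ω) P := by
      refine aux_intble (C := 1 / δ * 1 * Cg') (hζ2asm.mul hfasm) ?_
      filter_upwards [hζ2bd, hfbd] with ω h h'
      exact aux_abs_mul_le h h'
    have ea : ∫ ω, φ1 ω * p ω ∂P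
        = ∫ ω, ζ1 ω * G ω ∂P - ∫ ω, ζ1 ω * k0 (V ω) ∂P := by
      rw [← integral_sub hint1 hint2]
      refine integral_congr_ae ?_
      filter_upwards [hinvp] with ω h
      obtain ⟨-, -, hp0, hp1⟩ := h
      simp only [hφ1def, hζ1def]
      field_simp
    have eb : ∫ ω, φ2 ω * (1 - p ω) ∂P
        = ∫ ω, ζ2 ω * k0 (V ω) ∂P - ∫ ω, ζ2 ω * μc ω ∂P := by
      rw [← integral_sub hint3 hint4]
      refine integral_congr_ae ?_
      filter_upwards [hinvp] with ω h
      obtain ⟨-, -, hp0, hp1⟩ := h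
      simp only [hφ2def, hζ2def]
      field_simp
    -- use key𝓥
    have ec : ∫ ω, ζ1 ω * G ω ∂P = ∫ ω, ζ1 ω * f ω ∂P :=
      key𝓥 ζ1 G _ Cg' hζ1sm hGmeas.aestronglyMeasurable hζ1bd (.of_forall hGbd) hGint
    have ed : ∫ ω, ζ2 ω * μc ω ∂P = ∫ ω, ζ2 ω * f ω ∂P := by
      have h' := key𝓥 ζ2 μc (1 / δ * 1) Cg' hζ2sm hμcasm hζ2bd hμcbd hμcint
      rw [h']
      refine integral_congr_ae ?_
      filter_upwards [condExp_condExp_of_le h𝓥𝓦 h𝓦le (f := G) (μ := P)] with ω h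
      rw [hμcdef, hfdef]
      rw [h]
    -- combine everything
    have hgoal : ∫ ω in V ⁻¹' B, (1 / p ω - 1 / (1 - p ω)) * (f ω - k0 (V ω)) ∂P
        = ∫ ω, ζ1 ω * f ω ∂P - ∫ ω, ζ1 ω * k0 (V ω) ∂P
          + (∫ ω, ζ2 ω * k0 (V ω) ∂P - ∫ ω, ζ2 ω * f ω ∂P) := by
      have hAmeas : MeasurableSet (V ⁻¹' B) := hV hB
      have i12 : Integrable (fun ω => ζ1 ω * f ω - ζ1 ω * k0 (V ω)) P := hint5.sub hint2
      have i34 : Integrable (fun ω => ζ2 ω * k0 (V ω) - ζ2 ω * f ω) P := hint3.sub hint6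
      calc ∫ ω in V ⁻¹' B, (1 / p ω - 1 / (1 - p ω)) * (f ω - k0 (V ω)) ∂P
          = ∫ ω, (V ⁻¹' B).indicator
              (fun ω => (1 / p ω - 1 / (1 - p ω)) * (f ω - k0 (V ω))) ω ∂P :=
            (integral_indicator hAmeas).symm
        _ = ∫ ω, (ζ1 ω * f ω - ζ1 ω * k0 (V ω) + (ζ2 ω * k0 (V ω) - ζ2 ω * f ω)) ∂P := by
            refine integral_congr_ae (.of_forall fun ω => ?_)
            simp only [hζ1def, hζ2def, hkdef]
            by_cases h : V ω ∈ B
            · have hω : ω ∈ V ⁻¹' B := h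
              rw [Set.indicator_of_mem hω]
              simp only [Set.indicator_apply, h, if_true]
              ring
            · have hω : ω ∉ V ⁻¹' B := h
              rw [Set.indicator_of_notMem hω]
              simp only [Set.indicator_apply, h, if_false]
              ring
        _ = (∫ ω, (ζ1 ω * f ω - ζ1 ω * k0 (V ω)) ∂P)
            + ∫ ω, (ζ2 ω * k0 (V ω) - ζ2 ω * f ω) ∂P := integral_add i12 i34
        _ = ∫ ω, ζ1 ω * f ω ∂P - ∫ ω, ζ1 ω * k0 (V ω) ∂P
            + (∫ ω, ζ2 ω * k0 (V ω) ∂P - ∫ ω, ζ2 ω * f ω ∂P) :=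
            congrArg₂ (· + ·) (integral_sub hint5 hint2) (integral_sub hint3 hint6)
    rw [hgoal]
    have hz : ∫ ω, φ1 ω * p ω ∂P + ∫ ω, φ2 ω * (1 - p ω) ∂P = 0 := by
      rw [← e1, ← e2]; exact hsplit
    rw [ea, eb, ec] at hz
    linarith [ed, hz]
  -- Step 4: conclude via the conditional expectation characterization
  set η : Ω → ℝ := fun ω => (1 / p ω - 1 / (1 - p ω)) * (f ω - k0 (V ω)) with hηdef
  have hηsm : StronglyMeasurable[MeasurableSpace.comap V m𝒱] η := by
    refine StronglyMeasurable.mul ?_ (hfsm.sub hk0V𝓥.stronglyMeasurable)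
    exact ((measurable_const.div hp𝓥).sub
      (measurable_const.div (measurable_const.sub hp𝓥))).stronglyMeasurable
  have hηbd : ∀ᵐ ω ∂P, |η ω| ≤ (1 / δ + 1 / δ) * (Cg' + Ck0') := by
    filter_upwards [hpos, hfbd] with ω h hf'
    have h1 : 0 < p ω := lt_of_lt_of_le hδ0 h.1
    have h2 : 0 < 1 - p ω := by nlinarith [h.2]
    have ha : |1 / p ω - 1 / (1 - p ω)| ≤ 1 / δ + 1 / δ := by
      refine (abs_sub _ _).trans (add_le_add ?_ ?_)
      · rw [abs_of_pos (by positivity)]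
        exact one_div_le_one_div_of_le hδ0 h.1
      · rw [abs_of_pos (by positivity)]
        exact one_div_le_one_div_of_le hδ0 (by nlinarith [h.2])
    have hb : |f ω - k0 (V ω)| ≤ Cg' + Ck0' :=
      (abs_sub _ _).trans (add_le_add hf' (hk0bd ω))
    exact aux_abs_mul_le ha hb
  have hηint : Integrable η P :=
    aux_intble ((hηsm.mono h𝓥le).aestronglyMeasurable) hηbd
  have hη0 : η =ᵐ[P] 0 := by
    have h1 : η =ᵐ[P] P[(0 : Ω → ℝ) | MeasurableSpace.comap V m𝒱] := by
      refine ae_eq_condExp_of_forall_setIntegral_eq h𝓥le (integrable_zero _ _ _)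
        (fun s _ _ => hηint.integrableOn) (fun s hs _ => ?_)
        hηsm.aestronglyMeasurable
      obtain ⟨B, hB, rfl⟩ := hs
      simp only [Pi.zero_apply, integral_zero]
      exact hsetid B hB
    refine h1.trans ?_
    rw [condExp_zero]
  -- final a.e. argument
  filter_upwards [hη0, hpos, hπhalf] with ω h0 hp' hhalf
  have h1 : 0 < p ω := lt_of_lt_of_le hδ0 hp'.1
  have h2 : 0 < 1 - p ω := by nlinarith [hp'.2]
  have hne : 1 / p ω - 1 / (1 - p ω) ≠ 0 := by
    intro h
    have hp0 : p ω ≠ 0 := ne_of_gt h1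
    have hp1 : (1 : ℝ) - p ω ≠ 0 := ne_of_gt h2
    apply hhalf
    field_simp at h
    linarith
  have h0' : (1 / p ω - 1 / (1 - p ω)) * (f ω - k0 (V ω)) = 0 := h0
  rcases mul_eq_zero.mp h0' with h | h
  · exact absurd h hne
  · have hfk : f ω = k0 (V ω) := by linarith
    rw [hfdef] at hfk
    exact hfk.symm
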